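/- Consider the DGL-based classification setup with M ≥ 2 hypotheses over a finite alphabet 𝒳, test sequence length n, and training sequence length N = nα for α > 0, where the true source distributions P_1,…,P_M satisfy min_{i ≠ j} V(P_i, P_j) > 0. Then the classification error probability satisfies Pr[e_CL] ≤ 2M · exp(−n( 2α (min_{i ≠ j} V(P_i, P_j))² / (3|𝒳| + 2√α)² − max{ 2·ln(M−1)/n , ln|𝒳| / n } )). -/

import Mathlib

open MeasureTheory ProbabilityTheory

/-- Total variation distance between two probability mass functions on a
finite alphabet: `V(P,Q) = (1/2) * ∑ a, |P a - Q a|`. -/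
noncomputable def tvDist {𝒳 : Type*} [Fintype 𝒳] (P Q : 𝒳 → ℝ) : ℝ :=
  (1 / 2) * ∑ a, |P a - Q a|

/-- Minimum of `tvDist (Q i) (Q j)` over all ordered pairs of distinct indices. -/
noncomputable def minPairTV {𝒳 : Type*} [Fintype 𝒳] {M : ℕ} (Q : Fin M → 𝒳 → ℝ) : ℝ :=
  sInf {x | ∃ i j : Fin M, i ≠ j ∧ x = tvDist (Q i) (Q j)}

/-- Empirical distribution of a sample `x : Fin N → 𝒳`:
`T a = (1/N) * #{k : x k = a}`. -/
noncomputable def empDist {𝒳 : Type*} [Fintype 𝒳] [DecidableEq 𝒳] {N : ℕ}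
    (x : Fin N → 𝒳) : 𝒳 → ℝ :=
  fun a => ((Finset.univ.filter fun k => x k = a).card : ℝ) / N

/-- The DGL statistic of hypothesis `i`: the maximum over the sets
`A_{p,q} = {a : T q a ≤ T p a}` (for `p < q`) of `|T_i(A) - ν(A)|`. -/
noncomputable def dglScore {𝒳 : Type*} [Fintype 𝒳] {M : ℕ}
    (T : Fin M → 𝒳 → ℝ) (ν : 𝒳 → ℝ) (i : Fin M) : ℝ :=
  sSup {x | ∃ p q : Fin M, p < q ∧
    x = |(∑ a ∈ Finset.univ.filter fun a => T q a ≤ T p a, T i a) -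
         (∑ a ∈ Finset.univ.filter fun a => T q a ≤ T p a, ν a)|}

/-- The DGL test: accept the smallest hypothesis index minimizing the DGL statistic. -/
noncomputable def dglClassify {𝒳 : Type*} [Fintype 𝒳] {M : ℕ} (hM : 0 < M)
    (T : Fin M → 𝒳 → ℝ) (ν : 𝒳 → ℝ) : Fin M :=
  (Finset.univ.filter fun i => ∀ j, dglScore T ν i ≤ dglScore T ν j).min' (by
    obtain ⟨i, -, hi⟩ := Finset.exists_min_image Finset.univ (dglScore T ν)
      ⟨⟨0, hM⟩, Finset.mem_univ _⟩
    exact ⟨i, Finset.mem_filter.mpr ⟨Finset.mem_univ _, fun j => hi j (Finset.mem_univ _)⟩⟩)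

/-- The discrete measure on `𝒳` whose mass at `a` is `P a`. -/
noncomputable def measOf {𝒳 : Type*} [Fintype 𝒳] [MeasurableSpace 𝒳] (P : 𝒳 → ℝ) :
    Measure 𝒳 :=
  ∑ a, ENNReal.ofReal (P a) • Measure.dirac a

/-- The joint law of the DGL-based classification experiment on the sample space
`(training sequences) × (true hypothesis index) × (test sequence)`:
the `M` training sequences of length `N` are i.i.d. from `P 1, …, P M` respectively
and mutually independent, the hypothesis index `J` is uniform on `Fin M` and
independent of the training data, and given `J = j` the test sequence of length `n`
is i.i.d. from `P j`. -/
noncomputable def classMeasure {𝒳 : Type*} [Fintype 𝒳] [MeasurableSpace 𝒳]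
    {M N n : ℕ} (P : Fin M → 𝒳 → ℝ) :
    Measure ((Fin M → Fin N → 𝒳) × Fin M × (Fin n → 𝒳)) :=
  (M : ENNReal)⁻¹ • ∑ j : Fin M,
    (Measure.pi fun i => Measure.pi fun _ : Fin N => measOf (P i)).prod
      ((Measure.dirac j).prod (Measure.pi fun _ : Fin n => measOf (P j)))

/-- The classification-error event: the DGL test applied with the empirical training
distributions as nominal distributions outputs an index different from the true one. -/
def errEvent {𝒳 : Type*} [Fintype 𝒳] [DecidableEq 𝒳] {M N n : ℕ} (hM : 0 < M) :
    Set ((Fin M → Fin N → 𝒳) × Fin M × (Fin n → 𝒳)) :=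
  {ω | dglClassify hM (fun i => empDist (ω.1 i)) (empDist ω.2.2) ≠ ω.2.1}

/-!
On the event that every empirical training distribution `T i` is `t₁`-close to `P i` in total
variation, the DGL test can only err if the test empirical measure misses `P J` by at least `t₃`
on one of the `M(M-1)/2` sets `A_{p,q}`. Otherwise the score of `J` is at most `t₁ + t₃`, while
for `i ≠ J` the set `A_{i,J}` (or `A_{J,i}`) realises `V(T i, T J) ≥ V(P i, P J) - 2 t₁`, which
forces a larger score as soon as `4 t₁ + 2 t₃ ≤ min V(P i, P j)`. Hoeffding's inequality bounds
each such deviation by `2 exp (-2 n t₃²)`, and, through a union over the letters, the probability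
that a training distribution is `t₁`-far by `2 |𝒳| exp (-2 N (2 t₁ / |𝒳|)²)`. Taking
`t₁ = 3|𝒳|V / (4D)` and `t₃ = √α V / D` with `D = 3|𝒳| + 2√α` turns both exponents into
multiples of `G = 2 n α V² / D²`, and the resulting bound is absorbed into
`2 M max ((M-1)², |𝒳|) exp (-G)` whenever the latter is below `1`.
-/

open Real Finset

section Hoeffding
variable {Ω : Type*} [MeasurableSpace Ω] (μ : Measure Ω) [IsProbabilityMeasure μ]

theorem measureReal_pi_sum_sub_integral_ge_le {f : Ω → ℝ} (hf : Measurable f)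
    (hf01 : ∀ ω, f ω ∈ Set.Icc 0 1) (m : ℕ) {ε : ℝ} (hε : 0 ≤ ε) :
    (Measure.pi fun _ : Fin m => μ).real {y | ε ≤ ∑ k, (f (y k) - μ[f])} ≤
      exp (-2 * ε ^ 2 / m) := by
  have h_indep : iIndepFun (fun (k : Fin m) (y : Fin m → Ω) => f (y k) - μ[f])
      (Measure.pi fun _ => μ) :=
    iIndepFun_pi (X := fun _ ω => f ω - μ[f]) fun _ => (hf.sub_const _).aemeasurable
  have h_subG : ∀ k ∈ (univ : Finset (Fin m)),
      HasSubgaussianMGF (fun y : Fin m → Ω => f (y k) - μ[f]) ((‖(1 : ℝ) - 0‖₊ / 2) ^ 2)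
        (Measure.pi fun _ => μ) := by
    intro k _
    have h := hasSubgaussianMGF_of_mem_Icc (μ := Measure.pi fun _ : Fin m => μ)
      (X := fun y => f (y k)) ((hf.comp (measurable_pi_apply k)).aemeasurable)
      (ae_of_all _ fun y => hf01 (y k))
    have hmean : (Measure.pi fun _ : Fin m => μ)[fun y => f (y k)] = μ[f] :=
      integral_comp_eval hf.aestronglyMeasurable
    simpa only [hmean] using h
  convert HasSubgaussianMGF.measure_sum_ge_le_of_iIndepFun h_indep h_subG hε using 2
  simp only [sub_zero, nnnorm_one, sum_const, card_univ, Fintype.card_fin, nsmul_eq_mul]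
  push_cast
  ring

theorem measureReal_pi_abs_sum_sub_integral_ge_le {f : Ω → ℝ} (hf : Measurable f)
    (hf01 : ∀ ω, f ω ∈ Set.Icc 0 1) (m : ℕ) {ε : ℝ} (hε : 0 ≤ ε) :
    (Measure.pi fun _ : Fin m => μ).real {y | ε ≤ |∑ k, (f (y k) - μ[f])|} ≤
      2 * exp (-2 * ε ^ 2 / m) := by
  have hcompl : μ[fun ω => 1 - f ω] = 1 - μ[f] := by
    rw [integral_sub (integrable_const 1)
      (Integrable.of_mem_Icc 0 1 hf.aemeasurable (ae_of_all _ hf01))]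
    simp
  have hneg : ∀ y : Fin m → Ω,
      ∑ k, ((1 - f (y k)) - μ[fun ω => 1 - f ω]) = -∑ k, (f (y k) - μ[f]) := by
    intro y
    rw [hcompl, ← sum_neg_distrib]
    exact sum_congr rfl fun k _ => by ring
  have hsub : {y : Fin m → Ω | ε ≤ |∑ k, (f (y k) - μ[f])|} ⊆
      {y | ε ≤ ∑ k, (f (y k) - μ[f])} ∪
        {y | ε ≤ ∑ k, ((1 - f (y k)) - μ[fun ω => 1 - f ω])} := by
    intro y hy
    simpa only [Set.mem_union, Set.mem_ofPred_eq, hneg] using le_abs.mp hy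
  calc _ ≤ _ := measureReal_mono hsub
    _ ≤ _ := measureReal_union_le _ _
    _ ≤ exp (-2 * ε ^ 2 / m) + exp (-2 * ε ^ 2 / m) := by
      gcongr
      · exact measureReal_pi_sum_sub_integral_ge_le μ hf hf01 m hε
      · exact measureReal_pi_sum_sub_integral_ge_le μ (f := fun ω => 1 - f ω)
          (measurable_const.sub hf)
          (fun ω => ⟨by linarith [(hf01 ω).2], by linarith [(hf01 ω).1]⟩) m hε
    _ = _ := by ring

end Hoeffding

section FiniteDistributions
variable {𝒳 : Type*} [Fintype 𝒳]

theorem nonempty_of_sum_eq_one {Q : 𝒳 → ℝ} (h : ∑ a, Q a = 1) : Nonempty 𝒳 := by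
  by_contra hempty
  rw [not_nonempty_iff] at hempty
  simp at h

theorem measOf_apply_finset [MeasurableSpace 𝒳] [MeasurableSingletonClass 𝒳] (Q : 𝒳 → ℝ)
    (A : Finset 𝒳) : measOf Q A = ∑ a ∈ A, ENNReal.ofReal (Q a) := by
  classical
  simp only [measOf, Measure.coe_finsetSum, Finset.sum_apply, Measure.smul_apply, smul_eq_mul,
    Measure.dirac_apply' _ A.finite_toSet.measurableSet]
  simp_rw [Set.indicator_apply, Finset.mem_coe, Pi.one_apply, mul_ite, mul_one, mul_zero]
  rw [sum_ite_mem, univ_inter]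

theorem measOf_real_apply_finset [MeasurableSpace 𝒳] [MeasurableSingletonClass 𝒳]
    {Q : 𝒳 → ℝ} (hQ0 : ∀ a, 0 ≤ Q a) (A : Finset 𝒳) :
    (measOf Q).real A = ∑ a ∈ A, Q a := by
  rw [measureReal_def, measOf_apply_finset, ← ENNReal.ofReal_sum_of_nonneg fun a _ => hQ0 a,
    ENNReal.toReal_ofReal (sum_nonneg fun a _ => hQ0 a)]

theorem isProbabilityMeasure_measOf [MeasurableSpace 𝒳] [MeasurableSingletonClass 𝒳]
    {Q : 𝒳 → ℝ} (hQ0 : ∀ a, 0 ≤ Q a) (hQ1 : ∑ a, Q a = 1) :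
    IsProbabilityMeasure (measOf Q) := by
  constructor
  simpa [← ENNReal.ofReal_sum_of_nonneg fun a _ => hQ0 a, hQ1] using measOf_apply_finset Q univ

theorem sum_empDist [DecidableEq 𝒳] {m : ℕ} (y : Fin m → 𝒳) (A : Finset 𝒳) :
    ∑ a ∈ A, empDist y a = #{k | y k ∈ A} / m := by
  simp only [empDist, ← sum_div]
  congr 1
  rw [card_eq_sum_card_fiberwise (f := y) (t := A) fun k hk => by simpa using hk]
  push_cast
  refine sum_congr rfl fun a ha => ?_
  congr 2
  ext k
  simp only [mem_filter, mem_univ, true_and]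
  grind

theorem sum_empDist_univ [DecidableEq 𝒳] {m : ℕ} (hm : 0 < m) (y : Fin m → 𝒳) :
    ∑ a, empDist y a = 1 := by
  rw [sum_empDist]
  simp [hm.ne']

end FiniteDistributions

section TotalVariation
variable {𝒳 : Type*} [Fintype 𝒳]

theorem tvDist_nonneg (Q R : 𝒳 → ℝ) : 0 ≤ tvDist Q R :=
  mul_nonneg (by norm_num) (sum_nonneg fun _ _ => abs_nonneg _)

theorem tvDist_comm (Q R : 𝒳 → ℝ) : tvDist Q R = tvDist R Q := by
  simp only [tvDist, abs_sub_comm (Q _)]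

theorem tvDist_triangle (Q R S : 𝒳 → ℝ) : tvDist Q S ≤ tvDist Q R + tvDist R S := by
  simp only [tvDist, ← mul_add, ← sum_add_distrib]
  gcongr with a
  exact abs_sub_le _ _ _

theorem minPairTV_nonneg {M : ℕ} (Q : Fin M → 𝒳 → ℝ) : 0 ≤ minPairTV Q :=
  Real.sInf_nonneg (by rintro _ ⟨i, j, -, rfl⟩; exact tvDist_nonneg _ _)

theorem minPairTV_le_tvDist {M : ℕ} (Q : Fin M → 𝒳 → ℝ) {i j : Fin M} (hij : i ≠ j) :
    minPairTV Q ≤ tvDist (Q i) (Q j) :=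
  csInf_le ⟨0, by rintro _ ⟨p, q, -, rfl⟩; exact tvDist_nonneg _ _⟩ ⟨i, j, hij, rfl⟩

/-- The set `A_{i,j}` of the DGL test is `scheffeSet (T i) (T j)`. -/
noncomputable def scheffeSet (Q R : 𝒳 → ℝ) : Finset 𝒳 :=
  univ.filter fun a => R a ≤ Q a

theorem abs_sum_sub_sum_le_tvDist {Q R : 𝒳 → ℝ} (hQR : ∑ a, Q a = ∑ a, R a) (A : Finset 𝒳) :
    |∑ a ∈ A, Q a - ∑ a ∈ A, R a| ≤ tvDist Q R := by
  classical
  -- `Q - R` has total mass `0`, so its masses on `A` and on `Aᶜ` are opposite.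
  have hzero : ∑ a ∈ A, (Q a - R a) + ∑ a ∈ Aᶜ, (Q a - R a) = 0 := by
    rw [sum_add_sum_compl, sum_sub_distrib, hQR, sub_self]
  have hA := abs_sum_le_sum_abs (fun a => Q a - R a) A
  have hAc := abs_sum_le_sum_abs (fun a => Q a - R a) Aᶜ
  have htot := sum_add_sum_compl A fun a => |Q a - R a|
  rw [← sum_sub_distrib, tvDist]
  rw [eq_neg_of_add_eq_zero_left hzero, abs_neg] at hA ⊢
  linarith

theorem sum_scheffeSet_sub_eq_tvDist {Q R : 𝒳 → ℝ} (hQR : ∑ a, Q a = ∑ a, R a) :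
    ∑ a ∈ scheffeSet Q R, Q a - ∑ a ∈ scheffeSet Q R, R a = tvDist Q R := by
  have hzero : ∑ a, (Q a - R a) = 0 := by rw [sum_sub_distrib, hQR, sub_self]
  rw [← sum_filter_add_sum_filter_not univ (fun a => R a ≤ Q a)] at hzero
  have hpos : ∑ a ∈ univ.filter (fun a => R a ≤ Q a), |Q a - R a| =
      ∑ a ∈ univ.filter (fun a => R a ≤ Q a), (Q a - R a) :=
    sum_congr rfl fun a ha => abs_of_nonneg (sub_nonneg.mpr (mem_filter.mp ha).2)
  have hneg : ∑ a ∈ univ.filter (fun a => ¬R a ≤ Q a), |Q a - R a| =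
      -∑ a ∈ univ.filter (fun a => ¬R a ≤ Q a), (Q a - R a) := by
    rw [← sum_neg_distrib]
    exact sum_congr rfl fun a ha => abs_of_neg (sub_neg.mpr (not_le.mp (mem_filter.mp ha).2))
  rw [scheffeSet, ← sum_sub_distrib, tvDist,
    ← sum_filter_add_sum_filter_not univ (fun a => R a ≤ Q a), hpos, hneg]
  linarith

theorem exists_le_abs_sub_of_le_tvDist [Nonempty 𝒳] {Q R : 𝒳 → ℝ} {u : ℝ}
    (h : u ≤ tvDist Q R) : ∃ a, 2 * u / Fintype.card 𝒳 ≤ |Q a - R a| := by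
  have hc : (0 : ℝ) < Fintype.card 𝒳 := Nat.cast_pos.mpr Fintype.card_pos
  obtain ⟨a, -, ha⟩ := exists_le_of_sum_le (s := univ) univ_nonempty
    (f := fun _ => 2 * u / Fintype.card 𝒳) (g := fun a => |Q a - R a|) (by
      rw [sum_const, card_univ, nsmul_eq_mul, mul_div_cancel₀ _ hc.ne']
      rw [tvDist] at h
      linarith)
  exact ⟨a, ha⟩

end TotalVariation

section EmpiricalConcentration
variable {𝒳 : Type*} [Fintype 𝒳] [DecidableEq 𝒳] [MeasurableSpace 𝒳]
  [MeasurableSingletonClass 𝒳] {Q : 𝒳 → ℝ} {m : ℕ}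

theorem measureReal_abs_sum_empDist_sub_ge_le (hQ0 : ∀ a, 0 ≤ Q a) (hQ1 : ∑ a, Q a = 1)
    (A : Finset 𝒳) (hm : 0 < m) {t : ℝ} (ht : 0 ≤ t) :
    (Measure.pi fun _ : Fin m => measOf Q).real
        {y | t ≤ |∑ a ∈ A, empDist y a - ∑ a ∈ A, Q a|} ≤ 2 * exp (-2 * m * t ^ 2) := by
  have := isProbabilityMeasure_measOf hQ0 hQ1
  have hm' : (0 : ℝ) < m := Nat.cast_pos.mpr hm
  set f : 𝒳 → ℝ := (A : Set 𝒳).indicator 1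
  have hmean : (measOf Q)[f] = ∑ a ∈ A, Q a := by
    rw [integral_indicator_one A.finite_toSet.measurableSet, measOf_real_apply_finset hQ0]
  have hsum : ∀ y : Fin m → 𝒳, ∑ k, (f (y k) - (measOf Q)[f]) =
      m * (∑ a ∈ A, empDist y a - ∑ a ∈ A, Q a) := by
    intro y
    rw [hmean, sum_empDist, mul_sub, mul_div_cancel₀ _ hm'.ne', sum_sub_distrib]
    simp [f, Set.indicator_apply, sum_boole]
  have hset : {y : Fin m → 𝒳 | t ≤ |∑ a ∈ A, empDist y a - ∑ a ∈ A, Q a|} =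
      {y | m * t ≤ |∑ k, (f (y k) - (measOf Q)[f])|} := by
    ext y
    rw [Set.mem_ofPred_eq, Set.mem_ofPred_eq, hsum, abs_mul, abs_of_pos hm',
      mul_le_mul_iff_right₀ hm']
  rw [hset]
  convert measureReal_pi_abs_sum_sub_integral_ge_le (measOf Q) (measurable_of_finite f)
    (fun a => ?_) m (by positivity : 0 ≤ (m : ℝ) * t) using 3
  · field_simp
  · simp only [f, Set.indicator_apply]
    split_ifs <;> simp

theorem measureReal_tvDist_empDist_ge_le (hQ0 : ∀ a, 0 ≤ Q a) (hQ1 : ∑ a, Q a = 1)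
    (hm : 0 < m) {u : ℝ} (hu : 0 ≤ u) :
    (Measure.pi fun _ : Fin m => measOf Q).real {y | u ≤ tvDist (empDist y) Q} ≤
      2 * Fintype.card 𝒳 * exp (-2 * m * (2 * u / Fintype.card 𝒳) ^ 2) := by
  have := isProbabilityMeasure_measOf hQ0 hQ1
  have := nonempty_of_sum_eq_one hQ1
  have hsub : {y : Fin m → 𝒳 | u ≤ tvDist (empDist y) Q} ⊆
      ⋃ a, {y | 2 * u / Fintype.card 𝒳 ≤ |∑ b ∈ {a}, empDist y b - ∑ b ∈ {a}, Q b|} := by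
    intro y hy
    simpa using exists_le_abs_sub_of_le_tvDist hy
  calc _ ≤ _ := measureReal_mono hsub
    _ ≤ _ := measureReal_iUnion_fintype_le _
    _ ≤ ∑ _a : 𝒳, 2 * exp (-2 * m * (2 * u / Fintype.card 𝒳) ^ 2) :=
      sum_le_sum fun a _ => measureReal_abs_sum_empDist_sub_ge_le hQ0 hQ1 {a} hm
        (by positivity)
    _ = _ := by rw [sum_const, card_univ, nsmul_eq_mul]; ring

end EmpiricalConcentration

section DGL
variable {𝒳 : Type*} [Fintype 𝒳] {M : ℕ}

theorem abs_sub_le_dglScore (T : Fin M → 𝒳 → ℝ) (ν : 𝒳 → ℝ) {p q : Fin M} (hpq : p < q)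
    (r : Fin M) :
    |∑ a ∈ scheffeSet (T p) (T q), T r a - ∑ a ∈ scheffeSet (T p) (T q), ν a| ≤
      dglScore T ν r := by
  refine le_csSup ?_ ⟨p, q, hpq, rfl⟩
  refine ((Set.finite_univ (α := Fin M × Fin M)).image fun pq =>
    |∑ a ∈ scheffeSet (T pq.1) (T pq.2), T r a - ∑ a ∈ scheffeSet (T pq.1) (T pq.2), ν a|)
    |>.subset ?_ |>.bddAbove
  rintro x ⟨p, q, -, rfl⟩
  exact ⟨(p, q), Set.mem_univ _, rfl⟩

theorem dglScore_le (hM : 1 < M) (T : Fin M → 𝒳 → ℝ) (ν : 𝒳 → ℝ) (r : Fin M) {b : ℝ}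
    (h : ∀ p q : Fin M, p < q →
      |∑ a ∈ scheffeSet (T p) (T q), T r a - ∑ a ∈ scheffeSet (T p) (T q), ν a| ≤ b) :
    dglScore T ν r ≤ b := by
  refine csSup_le ⟨_, ⟨0, by omega⟩, ⟨1, hM⟩, Fin.mk_lt_mk.mpr zero_lt_one, rfl⟩ ?_
  rintro x ⟨p, q, hpq, rfl⟩
  exact h p q hpq

theorem dglClassify_eq_of_forall_lt (hM : 0 < M) (T : Fin M → 𝒳 → ℝ) (ν : 𝒳 → ℝ) {j : Fin M}
    (h : ∀ i, i ≠ j → dglScore T ν j < dglScore T ν i) : dglClassify hM T ν = j := by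
  by_contra hne
  have hmem : dglClassify hM T ν ∈ univ.filter fun i => ∀ j, dglScore T ν i ≤ dglScore T ν j :=
    min'_mem _ _
  exact (h _ hne).not_ge ((mem_filter.mp hmem).2 j)

theorem exists_lt_abs_sum_scheffeSet_sub_eq_tvDist {T : Fin M → 𝒳 → ℝ}
    (hT : ∀ i, ∑ a, T i a = 1) {i j : Fin M} (hij : i ≠ j) :
    ∃ p q : Fin M, p < q ∧
      |∑ a ∈ scheffeSet (T p) (T q), T i a - ∑ a ∈ scheffeSet (T p) (T q), T j a| =
        tvDist (T i) (T j) := by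
  have hsum : ∀ p q, ∑ a, T p a = ∑ a, T q a := fun p q => by rw [hT, hT]
  rcases hij.lt_or_gt with h | h
  · refine ⟨i, j, h, ?_⟩
    rw [sum_scheffeSet_sub_eq_tvDist (hsum i j), abs_of_nonneg (tvDist_nonneg _ _)]
  · refine ⟨j, i, h, ?_⟩
    rw [abs_sub_comm, sum_scheffeSet_sub_eq_tvDist (hsum j i),
      abs_of_nonneg (tvDist_nonneg _ _), tvDist_comm]

theorem dglClassify_eq_of_forall_abs_sub_lt (hM : 0 < M) {T P : Fin M → 𝒳 → ℝ} (ν : 𝒳 → ℝ)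
    (hT : ∀ i, ∑ a, T i a = 1) (hP : ∀ i, ∑ a, P i a = 1) {t₁ t₃ : ℝ}
    (hsep : ∀ p q, p ≠ q → 4 * t₁ + 2 * t₃ ≤ tvDist (P p) (P q))
    (hTP : ∀ i, tvDist (T i) (P i) < t₁) {j : Fin M}
    (hν : ∀ p q, p < q →
      |∑ a ∈ scheffeSet (T p) (T q), P j a - ∑ a ∈ scheffeSet (T p) (T q), ν a| < t₃) :
    dglClassify hM T ν = j := by
  refine dglClassify_eq_of_forall_lt hM T ν fun i hij => ?_
  have hM1 : 1 < M := by
    by_contra! h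
    exact hij (Fin.ext (by omega))
  have hj : dglScore T ν j ≤ t₁ + t₃ := by
    refine dglScore_le hM1 T ν j fun p q hpq => ?_
    have hTj := abs_sum_sub_sum_le_tvDist ((hT j).trans (hP j).symm) (scheffeSet (T p) (T q))
    exact (abs_sub_le _ _ _).trans (add_le_add (hTj.trans (hTP j).le) (hν p q hpq).le)
  obtain ⟨p, q, hpq, hA⟩ := exists_lt_abs_sum_scheffeSet_sub_eq_tvDist hT hij
  have hTij : tvDist (T i) (T j) ≤ dglScore T ν i + dglScore T ν j := by
    rw [← hA]
    refine (abs_sub_le _ (∑ a ∈ scheffeSet (T p) (T q), ν a) _).trans (add_le_add ?_ ?_)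
    · exact abs_sub_le_dglScore T ν hpq i
    · rw [abs_sub_comm]
      exact abs_sub_le_dglScore T ν hpq j
  have hPij : tvDist (P i) (P j) ≤
      tvDist (T i) (P i) + tvDist (T i) (T j) + tvDist (T j) (P j) := by
    have h1 := tvDist_triangle (P i) (T i) (P j)
    have h2 := tvDist_triangle (T i) (T j) (P j)
    rw [tvDist_comm (P i) (T i)] at h1
    linarith
  linarith [hsep i j hij, hTP i, hTP j]

end DGL

section Experiment
variable {𝒳 : Type*} [Fintype 𝒳] [MeasurableSpace 𝒳] [MeasurableSingletonClass 𝒳]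
  {M N n : ℕ} {P : Fin M → 𝒳 → ℝ}

theorem classMeasure_le_of_slice_le (hP0 : ∀ i a, 0 ≤ P i a) (hP1 : ∀ i, ∑ a, P i a = 1)
    (S : Set ((Fin M → Fin N → 𝒳) × Fin M × (Fin n → 𝒳))) (Bad : Set (Fin M → Fin N → 𝒳))
    (B : ENNReal)
    (h : ∀ T ∉ Bad, ∀ j, (Measure.pi fun _ : Fin n => measOf (P j)) {x | (T, j, x) ∈ S} ≤ B) :
    classMeasure P S ≤
      B + (Measure.pi fun i => Measure.pi fun _ : Fin N => measOf (P i)) Bad := by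
  have := fun i => isProbabilityMeasure_measOf (hP0 i) (hP1 i)
  set train := Measure.pi fun i => Measure.pi fun _ : Fin N => measOf (P i)
  have hslice : ∀ j, (train.prod ((Measure.dirac j).prod
      (Measure.pi fun _ : Fin n => measOf (P j)))) S ≤ B + train Bad := by
    intro j
    rw [Measure.prod_apply S.toFinite.measurableSet]
    calc _ ≤ ∫⁻ T, B + Bad.indicator 1 T ∂train := by
          refine lintegral_mono fun T => ?_
          rw [Measure.dirac_prod, Measure.map_apply measurable_prodMk_left
            (Set.toFinite _).measurableSet]
          by_cases hT : T ∈ Bad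
          · simpa [hT] using le_add_left prob_le_one
          · rw [Set.indicator_of_notMem hT, add_zero]
            exact h T hT j
      _ = B + train Bad := by
          rw [lintegral_add_left measurable_const, lintegral_const, measure_univ, mul_one,
            lintegral_indicator_one Bad.toFinite.measurableSet]
  obtain rfl | hM := Nat.eq_zero_or_pos M
  · simp [classMeasure]
  calc classMeasure P S ≤ (M : ENNReal)⁻¹ * ∑ _j : Fin M, (B + train Bad) := by
        rw [classMeasure, Measure.smul_apply, smul_eq_mul, Measure.coe_finsetSum,
          Finset.sum_apply]
        gcongr with j
        exact hslice j
    _ = B + train Bad := by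
        rw [sum_const, card_univ, Fintype.card_fin, nsmul_eq_mul,
          ENNReal.inv_mul_cancel_left (by exact_mod_cast hM.ne') (ENNReal.natCast_ne_top M)]

theorem classMeasure_le_one (hP0 : ∀ i a, 0 ≤ P i a) (hP1 : ∀ i, ∑ a, P i a = 1)
    (S : Set ((Fin M → Fin N → 𝒳) × Fin M × (Fin n → 𝒳))) : classMeasure P S ≤ 1 := by
  have := fun i => isProbabilityMeasure_measOf (hP0 i) (hP1 i)
  simpa using classMeasure_le_of_slice_le hP0 hP1 S ∅ 1 fun _ _ _ => prob_le_one

variable [DecidableEq 𝒳]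

theorem measureReal_errEvent_slice_le (hM : 0 < M) (hP0 : ∀ i a, 0 ≤ P i a)
    (hP1 : ∀ i, ∑ a, P i a = 1) (hN : 0 < N) (hn : 0 < n) {t₁ t₃ : ℝ} (ht₃ : 0 ≤ t₃)
    (hsep : ∀ p q, p ≠ q → 4 * t₁ + 2 * t₃ ≤ tvDist (P p) (P q))
    {T : Fin M → Fin N → 𝒳} (hT : ∀ i, tvDist (empDist (T i)) (P i) < t₁) (j : Fin M) :
    (Measure.pi fun _ : Fin n => measOf (P j)).real {x | (T, j, x) ∈ errEvent hM} ≤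
      M.choose 2 * (2 * exp (-2 * n * t₃ ^ 2)) := by
  have := isProbabilityMeasure_measOf (hP0 j) (hP1 j)
  set A := fun pq : Fin M × Fin M => scheffeSet (empDist (T pq.1)) (empDist (T pq.2))
  have hsub : {x : Fin n → 𝒳 | (T, j, x) ∈ errEvent hM} ⊆
      ⋃ pq ∈ univ.filter (fun pq : Fin M × Fin M => pq.1 < pq.2),
        {x | t₃ ≤ |∑ a ∈ A pq, empDist x a - ∑ a ∈ A pq, P j a|} := by
    intro x hx
    by_contra hcon
    simp only [Set.mem_iUnion, Set.mem_ofPred_eq, mem_filter, mem_univ, true_and, not_exists,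
      not_le] at hcon
    refine hx (dglClassify_eq_of_forall_abs_sub_lt hM _ (fun i => sum_empDist_univ hN (T i))
      hP1 hsep hT fun p q hpq => ?_)
    rw [abs_sub_comm]
    exact hcon (p, q) hpq
  calc _ ≤ _ := measureReal_mono hsub (measure_ne_top _ _)
    _ ≤ _ := measureReal_biUnion_finset_le _ _
    _ ≤ ∑ pq ∈ univ.filter (fun pq : Fin M × Fin M => pq.1 < pq.2),
          2 * exp (-2 * n * t₃ ^ 2) :=
      sum_le_sum fun pq _ => measureReal_abs_sum_empDist_sub_ge_le (hP0 j) (hP1 j) _ hn ht₃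
    _ = _ := by rw [sum_const, Fintype.card_product_filter_lt, Fintype.card_fin, nsmul_eq_mul]

theorem measureReal_exists_tvDist_empDist_ge_le (hP0 : ∀ i a, 0 ≤ P i a)
    (hP1 : ∀ i, ∑ a, P i a = 1) (hN : 0 < N) {t₁ : ℝ} (ht₁ : 0 ≤ t₁) :
    (Measure.pi fun i => Measure.pi fun _ : Fin N => measOf (P i)).real
        {T | ∃ i, t₁ ≤ tvDist (empDist (T i)) (P i)} ≤
      M * (2 * Fintype.card 𝒳 * exp (-2 * N * (2 * t₁ / Fintype.card 𝒳) ^ 2)) := by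
  have := fun i => isProbabilityMeasure_measOf (hP0 i) (hP1 i)
  have hset : {T : Fin M → Fin N → 𝒳 | ∃ i, t₁ ≤ tvDist (empDist (T i)) (P i)} =
      ⋃ i, (fun T => T i) ⁻¹' {y | t₁ ≤ tvDist (empDist y) (P i)} := by
    ext T
    simp
  rw [hset]
  calc _ ≤ _ := measureReal_iUnion_fintype_le _
    _ = ∑ i, (Measure.pi fun _ : Fin N => measOf (P i)).real
          {y | t₁ ≤ tvDist (empDist y) (P i)} := by
        refine sum_congr rfl fun i _ => ?_
        rw [measureReal_def, measureReal_def, (measurePreserving_eval _ i).measure_preimage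
          (Set.toFinite _).measurableSet.nullMeasurableSet]
    _ ≤ ∑ _i : Fin M, 2 * Fintype.card 𝒳 * exp (-2 * N * (2 * t₁ / Fintype.card 𝒳) ^ 2) :=
        sum_le_sum fun i _ => measureReal_tvDist_empDist_ge_le (hP0 i) (hP1 i) hN ht₁
    _ = _ := by rw [sum_const, card_univ, Fintype.card_fin, nsmul_eq_mul]

theorem toReal_classMeasure_errEvent_le (hM : 0 < M) (hP0 : ∀ i a, 0 ≤ P i a)
    (hP1 : ∀ i, ∑ a, P i a = 1) (hN : 0 < N) (hn : 0 < n) {t₁ t₃ : ℝ} (ht₁ : 0 ≤ t₁)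
    (ht₃ : 0 ≤ t₃) (hsep : ∀ p q, p ≠ q → 4 * t₁ + 2 * t₃ ≤ tvDist (P p) (P q)) :
    (classMeasure (N := N) (n := n) P (errEvent hM)).toReal ≤
      M.choose 2 * (2 * exp (-2 * n * t₃ ^ 2)) +
        M * (2 * Fintype.card 𝒳 * exp (-2 * N * (2 * t₁ / Fintype.card 𝒳) ^ 2)) := by
  have := fun i => isProbabilityMeasure_measOf (hP0 i) (hP1 i)
  set Bad : Set (Fin M → Fin N → 𝒳) := {T | ∃ i, t₁ ≤ tvDist (empDist (T i)) (P i)}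
  have h := classMeasure_le_of_slice_le (n := n) hP0 hP1 (errEvent hM) Bad _ fun T hT j => by
    rw [← ofReal_measureReal]
    refine ENNReal.ofReal_le_ofReal
      (measureReal_errEvent_slice_le hM hP0 hP1 hN hn ht₃ hsep (T := T) ?_ j)
    simpa [Bad] using hT
  refine ENNReal.toReal_le_of_le_ofReal (by positivity) (h.trans ?_)
  rw [← ofReal_measureReal, ← ENNReal.ofReal_add (by positivity) measureReal_nonneg]
  exact ENNReal.ofReal_le_ofReal
    (add_le_add_right (measureReal_exists_tvDist_empDist_ge_le hP0 hP1 hN ht₁) _)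

end Experiment

theorem pos_and_pos_of_natCast_eq_mul {N n : ℕ} {α : ℝ} (hN : 0 < N) (h : (N : ℝ) = n * α) :
    0 < n ∧ 0 < α := by
  rcases pos_and_pos_or_neg_and_neg_of_mul_pos (h ▸ Nat.cast_pos.mpr hN) with h | h
  · exact ⟨Nat.cast_pos.mp h.1, h.2⟩
  · exact absurd h.1 (Nat.cast_nonneg n).not_gt

theorem le_two_mul_mul_exp_neg {x m c K G : ℝ} (hm : 2 ≤ m) (hcK : c ≤ K)
    (hmK : (m - 1) ^ 2 ≤ K) (hG : 0 ≤ G) (h1 : x ≤ 1)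
    (h2 : x ≤ m * (m - 1) / 2 * (2 * exp (-G)) + m * (2 * c * exp (-(9 / 4 * G)))) :
    x ≤ 2 * m * (K * exp (-G)) := by
  rcases le_or_gt 1 (2 * m * (K * exp (-G))) with hbig | hbig
  · linarith
  have he := exp_pos (-G)
  have hK : m - 1 ≤ K := by nlinarith
  have h94 : exp (-(9 / 4 * G)) ≤ exp (-G) * exp (-G) := by
    rw [← exp_add]
    exact exp_le_exp.mpr (by linarith)
  -- Only when the bound is below `1` is `exp (-G)` small enough to absorb the training term.
  have htrain : m * (2 * c * exp (-(9 / 4 * G))) ≤ exp (-G) :=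
    calc m * (2 * c * exp (-(9 / 4 * G))) ≤ m * (2 * K * exp (-(9 / 4 * G))) := by gcongr
      _ ≤ m * (2 * K * (exp (-G) * exp (-G))) := by gcongr; linarith
      _ = 2 * m * (K * exp (-G)) * exp (-G) := by ring
      _ ≤ 1 * exp (-G) := by gcongr
      _ = exp (-G) := one_mul _
  have hcount : m * (m - 1) + 1 ≤ 2 * m * K := by nlinarith
  nlinarith

theorem le_two_mul_exp_neg_mul_sub_max {x m c n g : ℝ} (hm : 2 ≤ m) (hc : 0 < c) (hn : 0 < n)
    (hg : 0 ≤ g) (h1 : x ≤ 1)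
    (h2 : x ≤ m * (m - 1) / 2 * (2 * exp (-(n * g))) + m * (2 * c * exp (-(9 / 4 * (n * g))))) :
    x ≤ 2 * m * exp (-n * (g - max (2 * log (m - 1) / n) (log c / n))) := by
  have hexp : exp (-n * (g - max (2 * log (m - 1) / n) (log c / n))) =
      exp (max (2 * log (m - 1)) (log c)) * exp (-(n * g)) := by
    rw [← exp_add, mul_sub, neg_mul, neg_mul, sub_neg_eq_add, mul_max_of_nonneg _ _ hn.le,
      mul_div_cancel₀ _ hn.ne', mul_div_cancel₀ _ hn.ne', add_comm]
  rw [hexp]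
  refine le_two_mul_mul_exp_neg hm ?_ ?_ (by positivity) h1 h2
  · exact (exp_log hc).symm.le.trans (exp_le_exp.mpr (le_max_right _ _))
  · calc (m - 1) ^ 2 = exp (2 * log (m - 1)) := by
          rw [← exp_log (by nlinarith : 0 < (m - 1) ^ 2), log_pow]
          norm_num
      _ ≤ _ := exp_le_exp.mpr (le_max_left _ _)

theorem stmt_15 {𝒳 : Type*} [Fintype 𝒳] [DecidableEq 𝒳] [MeasurableSpace 𝒳]
    [MeasurableSingletonClass 𝒳]
    {M : ℕ} (hM : 2 ≤ M)
    (P : Fin M → 𝒳 → ℝ) (hP0 : ∀ i a, 0 ≤ P i a) (hP1 : ∀ i, ∑ a, P i a = 1)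
    {n N : ℕ} (hN : 0 < N) (α : ℝ)
    (hNnα : (N : ℝ) = n * α) :
    ((classMeasure (N := N) (n := n) P)
        (errEvent (𝒳 := 𝒳) (by omega : 0 < M))).toReal ≤
      2 * M * Real.exp (-(n : ℝ) *
        (2 * α * minPairTV P ^ 2 /
            (3 * (Fintype.card 𝒳 : ℝ) + 2 * Real.sqrt α) ^ 2 -
          max (2 * Real.log ((M : ℝ) - 1) / n)
            (Real.log (Fintype.card 𝒳 : ℝ) / n))) := by
  have hM0 : 0 < M := by omega
  obtain ⟨hn, hα⟩ := pos_and_pos_of_natCast_eq_mul hN hNnα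
  have : Nonempty 𝒳 := nonempty_of_sum_eq_one (hP1 ⟨0, hM0⟩)
  set V := minPairTV P
  set c : ℝ := (Fintype.card 𝒳 : ℝ)
  set D := 3 * c + 2 * √α
  have hc : 0 < c := Nat.cast_pos.mpr Fintype.card_pos
  have hD : 0 < D := by positivity
  have hV : 0 ≤ V := minPairTV_nonneg P
  -- `t₁ = 3cV/(4D)` and `t₃ = √α V/D` satisfy `4 t₁ + 2 t₃ = V`, and turn both Hoeffding
  -- exponents into multiples of `n * (2 α V² / D²)`.
  have herr := toReal_classMeasure_errEvent_le hM0 hP0 hP1 hN hn (t₁ := 3 * c * V / (4 * D))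
    (t₃ := √α * V / D) (by positivity) (by positivity) fun p q hpq => by
      convert minPairTV_le_tvDist P hpq using 1
      field_simp
      ring
  have htest : -2 * (n : ℝ) * (√α * V / D) ^ 2 = -(n * (2 * α * V ^ 2 / D ^ 2)) := by
    rw [div_pow, mul_pow, sq_sqrt hα.le]
    ring
  have htrain : -2 * (N : ℝ) * (2 * (3 * c * V / (4 * D)) / c) ^ 2 =
      -(9 / 4 * (n * (2 * α * V ^ 2 / D ^ 2))) := by
    rw [hNnα]
    field_simp
    ring
  rw [htest, htrain, Nat.cast_choose_two] at herr
  exact le_two_mul_exp_neg_mul_sub_max (by exact_mod_cast hM) hc (Nat.cast_pos.mpr hn)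
    (by positivity) (ENNReal.toReal_le_of_le_ofReal zero_le_one
      (by simpa using classMeasure_le_one hP0 hP1 _)) herr
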